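/- arXiv:1207.5702 — 3 statements merged into one kernel-verified Lean document; each statement's English description precedes it below -/
import Mathlib

section
/- Let G be a finite group. There exists s ∈ G such that left multiplication by s is an odd permutation of G if and only if |G| is even and the Sylow 2-subgroups of G are cyclic. -/
/-!
Let `H = ⟨s⟩`. Its right cosets `H t` split left multiplication by `s` into `[G : H]` cycles of
length `ord s`, so its sign is `(-(-1) ^ ord s) ^ [G : H]`, which is `-1` exactly when `ord s` is
even and `[G : H]` is odd. A cyclic subgroup of odd index contains a Sylow 2-subgroup, which is
then cyclic (and so are all its conjugates); conversely a generator of a cyclic Sylow 2-subgroup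
of a group of even order has even order and odd index.
-/

open Subgroup

namespace Equiv.Perm

theorem sign_mulLeft_eq_pow_index {G : Type*} [Group G] [Fintype G] [DecidableEq G]
    (H : Subgroup G) [Fintype H] (h : H) :
    sign (Equiv.mulLeft (h : G)) = sign (Equiv.mulLeft h) ^ H.index := by
  obtain ⟨T, hT, -⟩ := exists_isComplement_right H 1
  have : Fintype T := Fintype.ofFinite T
  have hconj : ∀ x : H × T, hT.equiv.symm (prodCongrLeft (fun _ => Equiv.mulLeft h) x)
      = Equiv.mulLeft (h : G) (hT.equiv.symm x) := fun _ => mul_assoc _ _ _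
  rw [← sign_eq_sign_of_equiv _ _ hT.equiv.symm hconj, sign_prodCongrLeft, Finset.prod_const,
    Finset.card_univ, ← Nat.card_eq_fintype_card, hT.card_right]

theorem sign_mulLeft_of_forall_mem_zpowers {H : Type*} [Group H] [Fintype H] [DecidableEq H]
    {g : H} (hg : ∀ x, x ∈ zpowers g) : sign (Equiv.mulLeft g) = -(-1) ^ Nat.card H := by
  rcases eq_or_ne g 1 with rfl | hne
  · have : Nat.card H = 1 := Nat.card_eq_one_iff_exists.mpr ⟨1, fun x => by simpa using hg x⟩
    rw [this]
    simp
  · have hsupp : (Equiv.mulLeft g).support = Finset.univ := by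
      ext x; simp [hne]
    have hcycle : (Equiv.mulLeft g).IsCycle := by
      refine ⟨1, by simpa using hne, fun y _ => ?_⟩
      obtain ⟨i, rfl⟩ := mem_zpowers_iff.mp (hg y)
      exact ⟨i, by simp⟩
    rw [hcycle.sign, hsupp, Finset.card_univ, Nat.card_eq_fintype_card]

theorem sign_mulLeft {G : Type*} [Group G] [Fintype G] [DecidableEq G] (s : G) :
    sign (Equiv.mulLeft s) = (-(-1) ^ orderOf s) ^ (zpowers s).index := by
  have : Fintype (zpowers s) := Fintype.ofFinite _
  have hgen : ∀ x : zpowers s, x ∈ zpowers ⟨s, mem_zpowers s⟩ := by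
    rintro ⟨-, i, rfl⟩
    exact ⟨i, rfl⟩
  rw [← Nat.card_zpowers, ← sign_mulLeft_of_forall_mem_zpowers hgen]
  exact sign_mulLeft_eq_pow_index (zpowers s) ⟨s, mem_zpowers s⟩

theorem sign_mulLeft_eq_neg_one_iff {G : Type*} [Group G] [Fintype G] [DecidableEq G] (s : G) :
    sign (Equiv.mulLeft s) = -1 ↔ 2 ∣ orderOf s ∧ ¬ 2 ∣ (zpowers s).index := by
  have hne : (-1 : ℤˣ) ≠ 1 := by decide
  rw [sign_mulLeft, ← even_iff_two_dvd, ← even_iff_two_dvd, Nat.not_even_iff_odd]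
  rcases Nat.even_or_odd (orderOf s) with h | h
  · simp [h.neg_one_pow, h, neg_one_pow_eq_neg_one_iff_odd hne]
  · simp [h.neg_one_pow, Nat.not_even_iff_odd.mpr h, hne.symm]

end Equiv.Perm

section

variable {G : Type*} [Group G] [Finite G] {p : ℕ} [hp : Fact p.Prime]

theorem Sylow.isCyclic_of_not_dvd_index {H : Subgroup G} [IsCyclic H] (hH : ¬ p ∣ H.index)
    (P : Sylow p G) : IsCyclic P := by
  obtain ⟨Q⟩ : Nonempty (Sylow p H) := inferInstance
  have hindex : ¬ p ∣ (Q.map H.subtype).index := by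
    rw [index_map_subtype]
    exact hp.out.not_dvd_mul Q.not_dvd_index hH
  let R := (Q.2.map H.subtype).toSylow hindex
  have : IsCyclic R := isCyclic_of_le (map_subtype_le (Q : Subgroup H))
  exact (Sylow.equiv P R).isCyclic.mpr this

theorem Sylow.exists_dvd_orderOf_not_dvd_index (P : Sylow p G) [IsCyclic P]
    (hG : p ∣ Nat.card G) :
    ∃ g : G, p ∣ orderOf g ∧ ¬ p ∣ (zpowers g).index := by
  obtain ⟨g, hg⟩ := (P : Subgroup G).isCyclic_iff_exists_zpowers_eq_top.mp ‹_›
  refine ⟨g, ?_, hg ▸ P.not_dvd_index⟩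
  rw [← Nat.card_zpowers, hg]
  rw [← P.card_mul_index] at hG
  exact (hp.out.dvd_mul.mp hG).resolve_right P.not_dvd_index

theorem exists_dvd_orderOf_not_dvd_index_zpowers_iff :
    (∃ g : G, p ∣ orderOf g ∧ ¬ p ∣ (zpowers g).index) ↔
      p ∣ Nat.card G ∧ ∀ P : Sylow p G, IsCyclic P := by
  constructor
  · rintro ⟨g, hg, hindex⟩
    refine ⟨?_, Sylow.isCyclic_of_not_dvd_index hindex⟩
    rw [← card_mul_index (zpowers g), Nat.card_zpowers]
    exact dvd_mul_of_dvd_left hg _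
  · rintro ⟨hG, hcyclic⟩
    obtain ⟨P⟩ : Nonempty (Sylow p G) := inferInstance
    have := hcyclic P
    exact P.exists_dvd_orderOf_not_dvd_index hG

end

/-- There exists `s ∈ G` acting as an odd permutation by left multiplication
iff `|G|` is even and the Sylow 2-subgroups of `G` are cyclic. -/
theorem stmt_2 (G : Type*) [Group G] [Fintype G] [DecidableEq G] :
    (∃ s : G, Equiv.Perm.sign (Equiv.mulLeft s) = -1) ↔
      Even (Fintype.card G) ∧ ∀ P : Sylow 2 G, IsCyclic P := by
  simp_rw [Equiv.Perm.sign_mulLeft_eq_neg_one_iff, exists_dvd_orderOf_not_dvd_index_zpowers_iff,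
    even_iff_two_dvd, Nat.card_eq_fintype_card]
end

section
/- Let G be a finite group of order n and exponent e, and s ∈ G of order m. Then (n/m)·(m-1)/2 is an integer for every s ∈ G if and only if it is not the case that n is even with cyclic Sylow 2-subgroups. -/
/-!
Since `m ∣ n`, the number `(n/m)·(m-1)/2` is an integer iff `2 ∣ (n/m)(m-1)`, which fails exactly
when `m` is even and `n/m` is odd, i.e. when the order of `s` carries the whole (nontrivial) 2-part
of `n`. A suitable power of such an `s` generates a subgroup of Sylow order, so the Sylow
2-subgroups are cyclic; conversely a generator of a cyclic Sylow 2-subgroup is such an element.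
-/

lemma Nat.ordProj_eq_ordProj_of_not_dvd_div {p m n : ℕ} (hmn : m ∣ n) (hn : n ≠ 0)
    (hp_div : ¬ p ∣ n / m) : ordProj[p] m = ordProj[p] n := by
  obtain ⟨k, rfl⟩ := hmn
  have hm : m ≠ 0 := left_ne_zero_of_mul hn
  have hk : k ≠ 0 := right_ne_zero_of_mul hn
  rw [Nat.mul_div_cancel_left k (Nat.pos_of_ne_zero hm)] at hp_div
  rw [Nat.ordProj_mul p hm hk, Nat.factorization_eq_zero_of_not_dvd hp_div, pow_zero, mul_one]

lemma Nat.not_two_dvd_div_mul_sub_one_iff {m n : ℕ} (hmn : m ∣ n) (hm : 0 < m) :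
    ¬ 2 ∣ n / m * (m - 1) ↔ ¬ 2 ∣ n / m ∧ 2 ∣ n := by
  obtain ⟨k, rfl⟩ := hmn
  rw [Nat.mul_div_cancel_left k hm, Nat.prime_two.dvd_mul, Nat.prime_two.dvd_mul]
  omega

lemma exists_intCast_eq_natCast_div_two_iff (N : ℕ) :
    (∃ k : ℤ, (N : ℚ) / 2 = k) ↔ 2 ∣ N := by
  constructor
  · rintro ⟨k, hk⟩
    have h : (N : ℚ) = 2 * k := by rw [← hk]; ring
    have h : (N : ℤ) = 2 * k := by exact_mod_cast h
    omega
  · rintro ⟨c, rfl⟩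
    exact ⟨c, by push_cast; ring⟩

lemma exists_intCast_eq_div_mul_sub_one_div_two_iff {m n : ℕ} (hmn : m ∣ n) (hm : 0 < m) :
    (∃ k : ℤ, ((n : ℚ) / m) * (((m : ℚ) - 1) / 2) = k) ↔ 2 ∣ n / m * (m - 1) := by
  have : ((n / m * (m - 1) : ℕ) : ℚ) / 2 = ((n : ℚ) / m) * (((m : ℚ) - 1) / 2) := by
    rw [Nat.cast_mul, Nat.cast_div hmn (by exact_mod_cast hm.ne'), Nat.cast_sub hm]
    push_cast
    ring
  rw [← exists_intCast_eq_natCast_div_two_iff, this]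

section Sylow

variable {G : Type*} [Group G] [Finite G] {p : ℕ} [hp : Fact p.Prime]

lemma Sylow.isCyclic_iff_exists_orderOf_eq (P : Sylow p G) :
    IsCyclic P ↔ ∃ g : G, orderOf g = ordProj[p] (Nat.card G) := by
  constructor
  · intro hP
    obtain ⟨g, hg⟩ := IsCyclic.exists_ofOrder_eq_natCard (α := P)
    exact ⟨g, by rw [Subgroup.orderOf_coe, hg, P.card_eq_multiplicity]⟩
  · rintro ⟨g, hg⟩
    let Q : Sylow p G := Sylow.ofCard (Subgroup.zpowers g) (by rw [Nat.card_zpowers, hg])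
    exact (Sylow.equiv P Q).isCyclic.mpr (Subgroup.isCyclic_zpowers g)

lemma exists_orderOf_eq_ordProj_card_iff :
    (∃ g : G, orderOf g = ordProj[p] (Nat.card G)) ↔ ∃ g : G, ¬ p ∣ Nat.card G / orderOf g := by
  have hG : Nat.card G ≠ 0 := Nat.card_pos.ne'
  constructor
  · rintro ⟨g, hg⟩
    exact ⟨g, hg ▸ Nat.not_dvd_ordCompl hp.out hG⟩
  · rintro ⟨g, hg⟩
    refine ⟨g ^ (orderOf g / ordProj[p] (orderOf g)), ?_⟩
    rw [orderOf_pow_orderOf_div (orderOf_pos g).ne' (Nat.ordProj_dvd _ p),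
      Nat.ordProj_eq_ordProj_of_not_dvd_div (orderOf_dvd_natCard g) hG hg]

lemma forall_sylow_isCyclic_iff_exists_not_dvd_card_div_orderOf :
    (∀ P : Sylow p G, IsCyclic P) ↔ ∃ g : G, ¬ p ∣ Nat.card G / orderOf g := by
  rw [← exists_orderOf_eq_ordProj_card_iff]
  obtain ⟨P⟩ := (inferInstance : Nonempty (Sylow p G))
  exact ⟨fun h => P.isCyclic_iff_exists_orderOf_eq.mp (h P),
    fun h Q => Q.isCyclic_iff_exists_orderOf_eq.mpr h⟩

end Sylow

theorem stmt_6_general (G : Type*) [Group G] [Fintype G] (n : ℕ)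
    (hn : Fintype.card G = n) :
    (∀ s : G, ∃ k : ℤ,
        ((n : ℚ) / (orderOf s : ℚ)) * (((orderOf s : ℚ) - 1) / 2) = (k : ℚ)) ↔
      ¬ (Even n ∧ ∀ P : Sylow 2 G, IsCyclic P) := by
  have : Fact (Nat.Prime 2) := ⟨Nat.prime_two⟩
  rw [← Nat.card_eq_fintype_card] at hn
  subst hn
  have hdvd (s : G) := orderOf_dvd_natCard s
  simp only [forall_sylow_isCyclic_iff_exists_not_dvd_card_div_orderOf, even_iff_two_dvd,
    fun s => exists_intCast_eq_div_mul_sub_one_div_two_iff (hdvd s) (orderOf_pos s)]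
  rw [← not_iff_not, not_not, not_forall]
  simp only [fun s => Nat.not_two_dvd_div_mul_sub_one_iff (hdvd s) (orderOf_pos s)]
  tauto

/-- `(n/m)·(m-1)/2` is an integer for every element order `m` of `G` iff it is
not the case that `n = |G|` is even with cyclic Sylow 2-subgroups. -/
theorem stmt_6 (G : Type*) [Group G] [Fintype G] (n e : ℕ)
    (hn : Fintype.card G = n) (he : Monoid.exponent G = e) :
    (∀ s : G, ∃ k : ℤ,
        ((n : ℚ) / (orderOf s : ℚ)) * (((orderOf s : ℚ) - 1) / 2) = (k : ℚ)) ↔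
      ¬ (Even n ∧ ∀ P : Sylow 2 G, IsCyclic P) :=
  stmt_6_general G n hn
end

section
/- For e ≥ 2, define c(e) = gcd over primes p dividing e of (p-1). Then gcd over divisors m of e with m > 1 of the values (e/m)·(m-1) equals c(e). -/
/-!
Every divisor `m` of `e` is a product of primes `p ≡ 1 [MOD c(e)]`, so `c(e) ∣ m - 1` and hence
`c(e)` divides every term `(e / m) * (m - 1) = e - e / m`. Conversely these terms are exactly the
numbers `e - d` for proper divisors `d` of `e`; taking `d = 1` and `d = p` shows that their gcd
divides `(e - 1) - (e - p) = p - 1` for every prime `p ∣ e`.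
-/

theorem Nat.modEq_one_of_forall_mem_primeFactors {c n : ℕ} (hn : n ≠ 0)
    (h : ∀ p ∈ n.primeFactors, p ≡ 1 [MOD c]) : n ≡ 1 [MOD c] := by
  induction n using Nat.recOnMul with
  | zero => exact absurd rfl hn
  | one => rfl
  | prime p hp => exact h p (hp.primeFactors ▸ Finset.mem_singleton_self p)
  | mul a b iha ihb =>
    obtain ⟨ha, hb⟩ := mul_ne_zero_iff.mp hn
    rw [Nat.primeFactors_mul ha hb] at h
    simpa using (iha ha fun p hp => h p (Finset.mem_union_left _ hp)).mul
      (ihb hb fun p hp => h p (Finset.mem_union_right _ hp))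

theorem Nat.gcd_primeFactors_sub_one_dvd_sub_one {e m : ℕ} (he : e ≠ 0) (hm : m ∣ e) :
    e.primeFactors.gcd (fun p => p - 1) ∣ m - 1 := by
  have hm0 : m ≠ 0 := ne_zero_of_dvd_ne_zero he hm
  refine (Nat.modEq_iff_dvd' (Nat.one_le_iff_ne_zero.mpr hm0)).mp
    (Nat.modEq_one_of_forall_mem_primeFactors hm0 fun p hp => ?_).symm
  have hp1 : 1 ≤ p := (Nat.prime_of_mem_primeFactors hp).one_le
  exact ((Nat.modEq_iff_dvd' hp1).mpr
    (Finset.gcd_dvd (f := fun p => p - 1) (Nat.primeFactors_mono hm he hp))).symm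

theorem Nat.div_mul_sub_one_of_dvd {e m : ℕ} (hm : m ∣ e) : e / m * (m - 1) = e - e / m := by
  rw [Nat.mul_sub_one, Nat.div_mul_cancel hm]

theorem Nat.gcd_div_mul_sub_one_dvd_sub_of_dvd {e d : ℕ} (he : e ≠ 0) (hd : d ∣ e) :
    (e.divisors.filter (fun m => 1 < m)).gcd (fun m => e / m * (m - 1)) ∣ e - d := by
  rcases eq_or_ne d e with rfl | hde
  · simp
  have hd_lt : d < e := lt_of_le_of_ne (Nat.le_of_dvd (Nat.pos_of_ne_zero he) hd) hde
  have hmem : e / d ∈ e.divisors.filter (fun m => 1 < m) := by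
    simp only [Finset.mem_filter, Nat.mem_divisors]
    exact ⟨⟨Nat.div_dvd_of_dvd hd, he⟩,
      (Nat.lt_div_iff_mul_lt' hd 1).mpr (by rwa [mul_one])⟩
  have h := Finset.gcd_dvd (f := fun m => e / m * (m - 1)) hmem
  rwa [Nat.div_mul_sub_one_of_dvd (Nat.div_dvd_of_dvd hd), Nat.div_div_self hd he] at h

theorem stmt_7_general (e : ℕ) :
    (e.divisors.filter (fun m => 1 < m)).gcd (fun m => (e / m) * (m - 1)) =
      e.primeFactors.gcd (fun p => p - 1) := by
  apply Nat.dvd_antisymm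
  · refine Finset.dvd_gcd fun p hp => ?_
    have he := (Nat.mem_primeFactors.mp hp).2.2
    have hp1 := (Nat.prime_of_mem_primeFactors hp).one_le
    have hpe := Nat.le_of_mem_primeFactors hp
    have h := Nat.dvd_sub (Nat.gcd_div_mul_sub_one_dvd_sub_of_dvd he (one_dvd e))
      (Nat.gcd_div_mul_sub_one_dvd_sub_of_dvd he (Nat.dvd_of_mem_primeFactors hp))
    rwa [show e - 1 - (e - p) = p - 1 by omega] at h
  · refine Finset.dvd_gcd fun m hm => ?_
    obtain ⟨⟨hme, he⟩, -⟩ := by simpa only [Finset.mem_filter, Nat.mem_divisors] using hm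
    exact (Nat.gcd_primeFactors_sub_one_dvd_sub_one he hme).mul_left _

/-- For `e ≥ 2`, `gcd_{m ∣ e, m > 1} (e/m)·(m-1) = c(e) := gcd_{p ∣ e prime} (p-1)`. -/
theorem stmt_7 (e : ℕ) (he : 2 ≤ e) :
    (e.divisors.filter (fun m => 1 < m)).gcd (fun m => (e / m) * (m - 1)) =
      e.primeFactors.gcd (fun p => p - 1) :=
  stmt_7_general e
end
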